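/- The number of semistandard Young tableaux of shape λ with entries in {1, ..., t} equals ∏_{r ∈ λ} (t + c_λ(r)) / h_λ(r), where c_λ(r) = j - i is the content of box r = (i,j) and h_λ(r) is its hook length. -/
import Mathlib

/-- The boxes (i,j) (0-based row i, column j) of the Young diagram with row lengths `r`
(at most `m` rows). -/
def ydBoxes (m : ℕ) (r : ℕ → ℕ) : Finset (ℕ × ℕ) :=
  (Finset.range m ×ˢ Finset.range (r 0)).filter fun p => p.2 < r p.1

/-- Length of column `j` of the diagram with row lengths `r` (at most `m` rows);
this is the conjugate partition λ'. -/
def ydCol (m : ℕ) (r : ℕ → ℕ) (j : ℕ) : ℕ :=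
  ((Finset.range m).filter fun i => j < r i).card

/-- Hook length of box (i,j) (0-based): λ_i + λ'_j - i - j + 1 in 1-based terms. -/
def ydHook (m : ℕ) (r : ℕ → ℕ) (i j : ℕ) : ℕ :=
  r i + ydCol m r j - i - j - 1

/-- `T` is a semistandard Young tableau of shape λ (row lengths `r`, at most `m` rows) with
entries in {1,…,t}: entries on boxes lie in [1,t] (and are 0 off the diagram), rows are
weakly increasing, and columns are strictly increasing. -/
def IsSSYT (m t : ℕ) (r : ℕ → ℕ) (T : ℕ → ℕ → ℕ) : Prop :=
  (∀ i j, ((i, j) ∈ ydBoxes m r → 1 ≤ T i j ∧ T i j ≤ t) ∧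
    ((i, j) ∉ ydBoxes m r → T i j = 0)) ∧
  (∀ i j, (i, j + 1) ∈ ydBoxes m r → T i j ≤ T i (j + 1)) ∧
  (∀ i j, (i + 1, j) ∈ ydBoxes m r → T i j < T (i + 1) j)

namespace HookAux

open Finset

/-! ### Basic facts about the diagram -/

lemma mem_ydBoxes {m : ℕ} {r : ℕ → ℕ} (hr : Antitone r) {i j : ℕ} :
    (i, j) ∈ ydBoxes m r ↔ i < m ∧ j < r i := by
  unfold ydBoxes
  simp only [mem_filter, mem_product, mem_range]
  constructor
  · rintro ⟨⟨h1, _⟩, h3⟩; exact ⟨h1, h3⟩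
  · rintro ⟨h1, h2⟩; exact ⟨⟨h1, lt_of_lt_of_le h2 (hr (Nat.zero_le i))⟩, h2⟩

lemma ydBoxes_congr {m m' : ℕ} {r : ℕ → ℕ} (h1 : ∀ i, m ≤ i → r i = 0)
    (h2 : ∀ i, m' ≤ i → r i = 0) : ydBoxes m r = ydBoxes m' r := by
  unfold ydBoxes
  ext p
  simp only [mem_filter, mem_product, mem_range]
  constructor
  · rintro ⟨⟨hm, h0⟩, hp⟩
    refine ⟨⟨?_, h0⟩, hp⟩
    by_contra hc
    rw [h2 p.1 (le_of_not_gt hc)] at hp; omega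
  · rintro ⟨⟨hm, h0⟩, hp⟩
    refine ⟨⟨?_, h0⟩, hp⟩
    by_contra hc
    rw [h1 p.1 (le_of_not_gt hc)] at hp; omega

lemma ydCol_congr {m m' : ℕ} {r : ℕ → ℕ} (h1 : ∀ i, m ≤ i → r i = 0)
    (h2 : ∀ i, m' ≤ i → r i = 0) (j : ℕ) : ydCol m r j = ydCol m' r j := by
  unfold ydCol
  congr 1
  ext i
  simp only [mem_filter, mem_range]
  constructor
  · rintro ⟨hm, hj⟩
    refine ⟨?_, hj⟩
    by_contra hc
    rw [h2 i (le_of_not_gt hc)] at hj; omega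
  · rintro ⟨hm, hj⟩
    refine ⟨?_, hj⟩
    by_contra hc
    rw [h1 i (le_of_not_gt hc)] at hj; omega

lemma ydHook_congr {m m' : ℕ} {r : ℕ → ℕ} (h1 : ∀ i, m ≤ i → r i = 0)
    (h2 : ∀ i, m' ≤ i → r i = 0) (i j : ℕ) : ydHook m r i j = ydHook m' r i j := by
  unfold ydHook
  rw [ydCol_congr h1 h2]

lemma isSSYT_congr {m m' t : ℕ} {r : ℕ → ℕ} (h1 : ∀ i, m ≤ i → r i = 0)
    (h2 : ∀ i, m' ≤ i → r i = 0) (T : ℕ → ℕ → ℕ) :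
    IsSSYT m t r T ↔ IsSSYT m' t r T := by
  unfold IsSSYT
  rw [ydBoxes_congr h1 h2]

lemma lt_ydCol {m : ℕ} {r : ℕ → ℕ} (hr : Antitone r) {i j : ℕ} (him : i < m)
    (hij : j < r i) : i < ydCol m r j := by
  have hsub : range (i + 1) ⊆ (range m).filter fun k => j < r k := by
    intro k hk
    simp only [mem_range] at hk
    simp only [mem_filter, mem_range]
    exact ⟨lt_of_le_of_lt (Nat.lt_succ_iff.mp hk) him,
      lt_of_lt_of_le hij (hr (Nat.lt_succ_iff.mp hk))⟩
  calc i < i + 1 := Nat.lt_succ_self i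
    _ = (range (i + 1)).card := (card_range _).symm
    _ ≤ _ := card_le_card hsub

lemma ydCol_le {m : ℕ} {r : ℕ → ℕ} (j : ℕ) : ydCol m r j ≤ m :=
  le_trans (card_filter_le _ _) (le_of_eq (card_range m))

lemma ydCol_anti {m : ℕ} {r : ℕ → ℕ} : Antitone (ydCol m r) := by
  intro a b hab
  exact card_le_card (fun i hi => by
    simp only [mem_filter, mem_range] at hi ⊢
    exact ⟨hi.1, lt_of_le_of_lt hab hi.2⟩)

/-- product over the boxes as a double product -/
lemma prod_ydBoxes {M : Type*} [CommMonoid M] (m : ℕ) (r : ℕ → ℕ) (hr : Antitone r)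
    (f : ℕ × ℕ → M) :
    ∏ p ∈ ydBoxes m r, f p = ∏ i ∈ range m, ∏ j ∈ range (r i), f (i, j) := by
  rw [Finset.prod_sigma']
  refine (Finset.prod_nbij (fun x : Σ _ : ℕ, ℕ => (x.1, x.2)) ?_ ?_ ?_ ?_).symm
  · rintro ⟨i, j⟩ hx
    simp only [mem_sigma, mem_range] at hx
    exact (mem_ydBoxes hr).mpr ⟨hx.1, hx.2⟩
  · rintro ⟨i, j⟩ h1 ⟨i', j'⟩ h2 h
    simp only [Prod.mk.injEq] at h
    simp [Sigma.ext_iff, h.1, h.2]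
  · rintro ⟨i, j⟩ hp
    rw [mem_coe, mem_ydBoxes hr] at hp
    exact ⟨⟨i, j⟩, by simp [mem_sigma, hp.1, hp.2], rfl⟩
  · intro x _; rfl

/-! ### Finiteness and degenerate cases -/

lemma ssyt_finite (m t : ℕ) (r : ℕ → ℕ) : {T : ℕ → ℕ → ℕ | IsSSYT m t r T}.Finite := by
  rw [← Set.finite_coe_iff]
  have hinj : Function.Injective
      (fun T : {T : ℕ → ℕ → ℕ // IsSSYT m t r T} =>
        (fun p : {p : ℕ × ℕ // p ∈ ydBoxes m r} =>
          (⟨T.1 p.1.1 p.1.2, by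
            have := (T.2.1 p.1.1 p.1.2).1 (by rw [Prod.mk.eta]; exact p.2)
            omega⟩ : Fin (t + 1)))) := by
    rintro ⟨T1, h1⟩ ⟨T2, h2⟩ h
    simp only [Subtype.mk.injEq]
    funext i j
    by_cases hij : (i, j) ∈ ydBoxes m r
    · have h2' := congrFun h ⟨(i, j), hij⟩
      exact congrArg Fin.val h2'
    · rw [(h1.1 i j).2 hij, (h2.1 i j).2 hij]
  exact Finite.of_injective _ hinj

lemma ssyt_empty {m t : ℕ} {r : ℕ → ℕ} (hr : Antitone r) (hrt : r t ≠ 0) (hm : t < m) :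
    {T : ℕ → ℕ → ℕ | IsSSYT m t r T} = ∅ := by
  ext T
  simp only [Set.mem_setOf_eq, Set.mem_empty_iff_false, iff_false]
  intro hT
  have hbox : ∀ i, i ≤ t → (i, 0) ∈ ydBoxes m r := fun i hi =>
    (mem_ydBoxes hr).mpr ⟨lt_of_le_of_lt hi hm,
      lt_of_lt_of_le (Nat.pos_of_ne_zero hrt) (hr hi)⟩
  have key : ∀ i, i ≤ t → i + 1 ≤ T i 0 := by
    intro i
    induction i with
    | zero => intro _; exact ((hT.1 0 0).1 (hbox 0 (Nat.zero_le t))).1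
    | succ k ih =>
      intro hk
      have h1 := ih (Nat.le_of_succ_le hk)
      have h2 := hT.2.2 k 0 (hbox (k + 1) hk)
      omega
  have h1 := key t le_rfl
  have h2 := ((hT.1 t 0).1 (hbox t le_rfl)).2
  omega

/-! ### the recursion -/

section Rec

variable (t : ℕ) (r : ℕ → ℕ)

/-- interlacing shapes -/
def Cset : Finset (Fin (t + 1) → ℕ) :=
  Fintype.piFinset fun i : Fin (t + 1) => Finset.Icc (r (i.1 + 1)) (r i.1)

/-- the shape function of `c` -/
def mu (c : Fin (t + 1) → ℕ) : ℕ → ℕ := fun i => if h : i < t + 1 then c ⟨i, h⟩ else 0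

variable {t r}

lemma mu_bounds {c : Fin (t + 1) → ℕ} (hc : c ∈ Cset t r) (i : Fin (t + 1)) :
    r (i.1 + 1) ≤ c i ∧ c i ≤ r i.1 := by
  rw [Cset, Fintype.mem_piFinset] at hc
  simpa [Finset.mem_Icc] using hc i

lemma mu_val (c : Fin (t + 1) → ℕ) {i : ℕ} (h : i < t + 1) : mu t c i = c ⟨i, h⟩ :=
  dif_pos h

lemma mu_anti {c : Fin (t + 1) → ℕ} (hr : Antitone r) (hc : c ∈ Cset t r) :
    Antitone (mu t c) := by
  apply antitone_nat_of_succ_le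
  intro i
  by_cases h : i + 1 < t + 1
  · have hi : i < t + 1 := by omega
    rw [mu_val c h, mu_val c hi]
    exact le_trans (mu_bounds hc ⟨i + 1, h⟩).2 (mu_bounds hc ⟨i, hi⟩).1
  · rw [mu, dif_neg h]
    exact Nat.zero_le _

lemma mu_le {c : Fin (t + 1) → ℕ} (hc : c ∈ Cset t r) (i : ℕ) : mu t c i ≤ r i := by
  by_cases h : i < t + 1
  · rw [mu_val c h]; exact (mu_bounds hc ⟨i, h⟩).2
  · rw [mu, dif_neg h]; exact Nat.zero_le _

lemma le_mu {c : Fin (t + 1) → ℕ} (h0 : ∀ i, t + 1 ≤ i → r i = 0) (hc : c ∈ Cset t r)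
    (i : ℕ) : r (i + 1) ≤ mu t c i := by
  by_cases h : i < t + 1
  · rw [mu_val c h]; exact (mu_bounds hc ⟨i, h⟩).1
  · rw [h0 (i + 1) (by omega)]; exact Nat.zero_le _

lemma mu_zero {c : Fin (t + 1) → ℕ} (i : ℕ) (hi : t + 1 ≤ i) : mu t c i = 0 := by
  simp [mu, Nat.not_lt.mpr hi]

/-- number of entries `≤ t` in row `i` -/
def cT (T : ℕ → ℕ → ℕ) : Fin (t + 1) → ℕ :=
  fun i => ((range (r i.1)).filter fun j => T i.1 j ≤ t).card

def restrictT (c : Fin (t + 1) → ℕ) (T : ℕ → ℕ → ℕ) : ℕ → ℕ → ℕ :=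
  fun i j => if j < mu t c i then T i j else 0

def extendT (c : Fin (t + 1) → ℕ) (T : ℕ → ℕ → ℕ) : ℕ → ℕ → ℕ :=
  fun i j => if i < t + 1 ∧ j < r i then (if j < mu t c i then T i j else t + 1) else 0

variable (hr : Antitone r) (h0 : ∀ i, t + 1 ≤ i → r i = 0)

include hr in
lemma row_mono {m u : ℕ} {T : ℕ → ℕ → ℕ} (hT : IsSSYT m u r T) {i j j' : ℕ}
    (hj : j ≤ j') (hj' : j' < r i) (him : i < m) : T i j ≤ T i j' := by
  induction j' with
  | zero => rw [Nat.le_zero.mp hj]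
  | succ k ih =>
    rcases Nat.lt_succ_iff_lt_or_eq.mp (Nat.lt_succ_of_le hj) with h | h
    · exact le_trans (ih (by omega) (by omega))
        (hT.2.1 i k ((mem_ydBoxes hr).mpr ⟨him, hj'⟩))
    · rw [h]

lemma downclosed_eq_range {S : Finset ℕ} (h : ∀ a b : ℕ, a ≤ b → b ∈ S → a ∈ S) :
    S = range S.card := by
  have hsub : S ⊆ range S.card := by
    intro x hx
    rw [mem_range]
    by_contra hc
    have hss : range (x + 1) ⊆ S := fun a ha =>
      h a x (by simpa [Nat.lt_succ_iff] using ha) hx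
    have := card_le_card hss
    rw [card_range] at this
    omega
  exact eq_of_subset_of_card_le hsub (le_of_eq (card_range _))

include hr in
lemma cT_lt_iff {T : ℕ → ℕ → ℕ} (hT : IsSSYT (t + 1) (t + 1) r T) (i : Fin (t + 1)) (j : ℕ) :
    j < cT (r := r) (t := t) T i ↔ j < r i.1 ∧ T i.1 j ≤ t := by
  set S := (range (r i.1)).filter (fun j => T i.1 j ≤ t) with hS
  have hdc : ∀ a b : ℕ, a ≤ b → b ∈ S → a ∈ S := by
    intro a b hab hb
    simp only [hS, mem_filter, mem_range] at hb ⊢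
    exact ⟨lt_of_le_of_lt hab hb.1, le_trans (row_mono hr hT hab hb.1 i.2) hb.2⟩
  have hrng := downclosed_eq_range hdc
  show j < S.card ↔ _
  constructor
  · intro hj
    have hjS : j ∈ S := by rw [hrng]; exact mem_range.mpr hj
    simpa [hS, mem_filter, mem_range] using hjS
  · intro hj
    have hjS : j ∈ S := by simp only [hS, mem_filter, mem_range]; exact hj
    rw [hrng, mem_range] at hjS
    exact hjS

include hr h0 in
lemma cT_mem {T : ℕ → ℕ → ℕ} (hT : IsSSYT (t + 1) (t + 1) r T) :
    cT (r := r) (t := t) T ∈ Cset t r := by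
  rw [Cset, Fintype.mem_piFinset]
  intro i
  rw [mem_Icc]
  constructor
  · rcases Nat.eq_zero_or_pos (r (i.1 + 1)) with h | h
    · omega
    · have hi1 : i.1 + 1 < t + 1 := by
        by_contra hc
        rw [h0 _ (by omega)] at h; omega
      have hlt : r (i.1 + 1) - 1 < cT (r := r) (t := t) T i := by
        rw [cT_lt_iff hr hT]
        have hbox : (i.1 + 1, r (i.1 + 1) - 1) ∈ ydBoxes (t + 1) r :=
          (mem_ydBoxes hr).mpr ⟨hi1, by omega⟩
        have h2 := hT.2.2 i.1 (r (i.1 + 1) - 1) hbox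
        have h3 := ((hT.1 (i.1 + 1) (r (i.1 + 1) - 1)).1 hbox).2
        have h4 : r (i.1 + 1) ≤ r i.1 := hr (Nat.le_succ i.1)
        exact ⟨by omega, by omega⟩
      omega
  · exact le_trans (card_filter_le _ _) (le_of_eq (card_range _))

include hr in
lemma mu_cT_lt_iff {T : ℕ → ℕ → ℕ} (hT : IsSSYT (t + 1) (t + 1) r T) (i j : ℕ) :
    j < mu t (cT (r := r) (t := t) T) i ↔ i < t + 1 ∧ j < r i ∧ T i j ≤ t := by
  by_cases h : i < t + 1
  · rw [mu_val _ h, cT_lt_iff hr hT ⟨i, h⟩ j]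
    simp [h, and_assoc]
  · rw [mu, dif_neg h]
    simp [h]

include hr h0 in
lemma restrict_ssyt {T : ℕ → ℕ → ℕ} (hT : IsSSYT (t + 1) (t + 1) r T) :
    IsSSYT (t + 1) t (mu t (cT (r := r) (t := t) T)) (restrictT (cT (r := r) (t := t) T) T) := by
  have hc := cT_mem hr h0 hT
  have hmuanti := mu_anti hr hc
  have hchar := mu_cT_lt_iff hr hT
  refine ⟨fun i j => ⟨fun hmem => ?_, fun hmem => ?_⟩, fun i j hmem => ?_, fun i j hmem => ?_⟩
  · rw [mem_ydBoxes hmuanti] at hmem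
    have h2 := (hchar i j).mp hmem.2
    simp only [restrictT, if_pos hmem.2]
    exact ⟨((hT.1 i j).1 ((mem_ydBoxes hr).mpr ⟨h2.1, h2.2.1⟩)).1, h2.2.2⟩
  · rw [mem_ydBoxes hmuanti] at hmem
    simp only [restrictT]
    split_ifs with hj
    · exact absurd ⟨((hchar i j).mp hj).1, hj⟩ hmem
    · rfl
  · rw [mem_ydBoxes hmuanti] at hmem
    have h2 := (hchar i (j + 1)).mp hmem.2
    have hrow := hT.2.1 i j ((mem_ydBoxes hr).mpr ⟨h2.1, h2.2.1⟩)
    have h1 : j < mu t (cT (r := r) (t := t) T) i :=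
      (hchar i j).mpr ⟨h2.1, by omega, le_trans hrow h2.2.2⟩
    simp only [restrictT, if_pos h1, if_pos hmem.2]
    exact hrow
  · rw [mem_ydBoxes hmuanti] at hmem
    have h2 := (hchar (i + 1) j).mp hmem.2
    have hcol := hT.2.2 i j ((mem_ydBoxes hr).mpr ⟨h2.1, h2.2.1⟩)
    have h1 : j < mu t (cT (r := r) (t := t) T) i :=
      (hchar i j).mpr ⟨by omega, lt_of_lt_of_le h2.2.1 (hr (Nat.le_succ i)), by omega⟩
    simp only [restrictT, if_pos h1, if_pos hmem.2]
    exact hcol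

include hr h0 in
lemma extend_ssyt {c : Fin (t + 1) → ℕ} (hc : c ∈ Cset t r) {T : ℕ → ℕ → ℕ}
    (hT : IsSSYT (t + 1) t (mu t c) T) :
    IsSSYT (t + 1) (t + 1) r (extendT (r := r) c T) := by
  have hmuanti := mu_anti hr hc
  refine ⟨fun i j => ⟨fun hmem => ?_, fun hmem => ?_⟩, fun i j hmem => ?_, fun i j hmem => ?_⟩
  · rw [mem_ydBoxes hr] at hmem
    simp only [extendT, if_pos (And.intro hmem.1 hmem.2)]
    split_ifs with hj
    · have := (hT.1 i j).1 ((mem_ydBoxes hmuanti).mpr ⟨hmem.1, hj⟩)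
      omega
    · omega
  · rw [mem_ydBoxes hr] at hmem
    simp only [extendT, if_neg hmem]
  · rw [mem_ydBoxes hr] at hmem
    obtain ⟨hi, hj1⟩ := hmem
    have hj0 : j < r i := by omega
    simp only [extendT, if_pos (And.intro hi hj0), if_pos (And.intro hi hj1)]
    by_cases h1 : j + 1 < mu t c i
    · rw [if_pos h1, if_pos (by omega : j < mu t c i)]
      exact hT.2.1 i j ((mem_ydBoxes hmuanti).mpr ⟨hi, h1⟩)
    · rw [if_neg h1]
      split_ifs with h2
      · have := (hT.1 i j).1 ((mem_ydBoxes hmuanti).mpr ⟨hi, h2⟩)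
        omega
      · exact le_rfl
  · rw [mem_ydBoxes hr] at hmem
    obtain ⟨hi1, hj1⟩ := hmem
    have hi : i < t + 1 := by omega
    have hj0 : j < r i := lt_of_lt_of_le hj1 (hr (Nat.le_succ i))
    have hjmu : j < mu t c i := lt_of_lt_of_le hj1 (le_mu h0 hc i)
    simp only [extendT, if_pos (And.intro hi hj0), if_pos (And.intro hi1 hj1), if_pos hjmu]
    by_cases h2 : j < mu t c (i + 1)
    · rw [if_pos h2]
      exact hT.2.2 i j ((mem_ydBoxes hmuanti).mpr ⟨hi1, h2⟩)
    · rw [if_neg h2]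
      have := (hT.1 i j).1 ((mem_ydBoxes hmuanti).mpr ⟨hi, hjmu⟩)
      omega

include hr in
lemma round1 {T : ℕ → ℕ → ℕ} (hT : IsSSYT (t + 1) (t + 1) r T) :
    extendT (r := r) (cT (r := r) (t := t) T) (restrictT (cT (r := r) (t := t) T) T) = T := by
  have hchar := mu_cT_lt_iff hr hT
  funext i j
  simp only [extendT, restrictT]
  by_cases hb : i < t + 1 ∧ j < r i
  · rw [if_pos hb]
    by_cases hj : j < mu t (cT (r := r) (t := t) T) i
    · rw [if_pos hj, if_pos hj]
    · rw [if_neg hj]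
      have hnot := (hchar i j).not.mp hj
      simp only [not_and, not_le] at hnot
      have hgt := hnot hb.1 hb.2
      have hbnd := ((hT.1 i j).1 ((mem_ydBoxes hr).mpr hb)).2
      omega
  · rw [if_neg hb]
    exact ((hT.1 i j).2 (by rw [mem_ydBoxes hr]; exact hb)).symm

include hr h0 in
lemma round2a {c : Fin (t + 1) → ℕ} (hc : c ∈ Cset t r) {T : ℕ → ℕ → ℕ}
    (hT : IsSSYT (t + 1) t (mu t c) T) :
    cT (r := r) (t := t) (extendT (r := r) c T) = c := by
  funext i
  show ((range (r i.1)).filter fun j => extendT (r := r) c T i.1 j ≤ t).card = c i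
  have hkey : ((range (r i.1)).filter fun j => extendT (r := r) c T i.1 j ≤ t)
      = range (c i) := by
    ext j
    simp only [mem_filter, mem_range]
    have hmuv : mu t c i.1 = c i := by rw [mu_val c i.2]
    constructor
    · rintro ⟨hj, hle⟩
      by_contra hcj
      have hmu : ¬ j < mu t c i.1 := by rw [hmuv]; exact hcj
      have hval : extendT (r := r) c T i.1 j = t + 1 := by
        simp only [extendT, if_pos (And.intro i.2 hj), if_neg hmu]
      omega
    · intro hj
      have hmu : j < mu t c i.1 := by rw [hmuv]; exact hj
      have hjr : j < r i.1 := lt_of_lt_of_le hmu (mu_le hc i.1)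
      refine ⟨hjr, ?_⟩
      simp only [extendT, if_pos (And.intro i.2 hjr), if_pos hmu]
      exact ((hT.1 i.1 j).1 ((mem_ydBoxes (mu_anti hr hc)).mpr ⟨i.2, hmu⟩)).2
  rw [hkey, card_range]

include hr h0 in
lemma round2b {c : Fin (t + 1) → ℕ} (hc : c ∈ Cset t r) {T : ℕ → ℕ → ℕ}
    (hT : IsSSYT (t + 1) t (mu t c) T) :
    restrictT c (extendT (r := r) c T) = T := by
  funext i j
  simp only [restrictT, extendT]
  by_cases hj : j < mu t c i
  · have hi : i < t + 1 := by
      by_contra hi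
      rw [mu_zero (c := c) i (by omega)] at hj; omega
    have hjr : j < r i := lt_of_lt_of_le hj (mu_le hc i)
    rw [if_pos hj, if_pos (And.intro hi hjr), if_pos hj]
  · rw [if_neg hj]
    exact ((hT.1 i j).2 (by
      rw [mem_ydBoxes (mu_anti hr hc)]
      exact fun h => hj h.2)).symm

include hr h0 in
lemma card_rec :
    {T : ℕ → ℕ → ℕ | IsSSYT (t + 1) (t + 1) r T}.ncard
      = ∑ c ∈ Cset t r, {T : ℕ → ℕ → ℕ | IsSSYT (t + 1) t (mu t c) T}.ncard := by
  classical
  have hSfin := ssyt_finite (t + 1) (t + 1) r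
  have hfin : ∀ c : Fin (t + 1) → ℕ,
      {T : ℕ → ℕ → ℕ | IsSSYT (t + 1) t (mu t c) T}.Finite :=
    fun c => ssyt_finite _ _ _
  have key : hSfin.toFinset = (Cset t r).biUnion
      (fun c => ((hfin c).toFinset).image (extendT (r := r) c)) := by
    ext T
    simp only [Set.Finite.mem_toFinset, mem_biUnion, mem_image, Set.mem_setOf_eq,
      Set.Finite.mem_toFinset]
    constructor
    · intro hT
      exact ⟨cT (r := r) (t := t) T, cT_mem hr h0 hT, restrictT _ T,
        restrict_ssyt hr h0 hT, round1 hr hT⟩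
    · rintro ⟨c, hcC, T', hT', rfl⟩
      exact extend_ssyt hr h0 hcC hT'
  have hdisj : ∀ c1 ∈ Cset t r, ∀ c2 ∈ Cset t r, c1 ≠ c2 →
      Disjoint (((hfin c1).toFinset).image (extendT (r := r) c1))
        (((hfin c2).toFinset).image (extendT (r := r) c2)) := by
    intro c1 h1 c2 h2 hne
    rw [Finset.disjoint_left]
    rintro T hT1 hT2
    simp only [mem_image, Set.Finite.mem_toFinset, Set.mem_setOf_eq] at hT1 hT2
    obtain ⟨T1, hT1', rfl⟩ := hT1
    obtain ⟨T2, hT2', hEq⟩ := hT2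
    apply hne
    calc c1 = cT (r := r) (t := t) (extendT (r := r) c1 T1) := (round2a hr h0 h1 hT1').symm
      _ = cT (r := r) (t := t) (extendT (r := r) c2 T2) := by rw [hEq]
      _ = c2 := round2a hr h0 h2 hT2'
  rw [Set.ncard_eq_toFinset_card _ hSfin, key, Finset.card_biUnion hdisj]
  apply Finset.sum_congr rfl
  intro c hcC
  rw [Set.ncard_eq_toFinset_card _ (hfin c)]
  apply Finset.card_image_of_injOn
  intro T1 hT1 T2 hT2 hEq
  rw [Finset.mem_coe, Set.Finite.mem_toFinset] at hT1 hT2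
  calc T1 = restrictT c (extendT (r := r) c T1) := (round2b hr h0 hcC hT1).symm
    _ = restrictT c (extendT (r := r) c T2) := by rw [hEq]
    _ = T2 := round2b hr h0 hcC hT2

end Rec

/-! ### hook-content product equals Weyl product -/

lemma fact_prod (a : ℕ) : ∀ k : ℕ, Nat.factorial a * ∏ j ∈ range k, (a + 1 + j) = Nat.factorial (a + k) := by
  intro k
  induction k with
  | zero => simp
  | succ k ih =>
    rw [prod_range_succ, ← mul_assoc, ih, show a + (k + 1) = (a + k) + 1 from rfl,
      Nat.factorial_succ]
    ring

lemma prod_range_sub (n : ℕ) : ∏ x ∈ range n, (n - x) = Nat.factorial n := by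
  have h := Finset.prod_range_reflect (fun j => j + 1) n
  rw [prod_range_add_one_eq_factorial] at h
  rw [← h]
  apply prod_congr rfl
  intro x hx
  rw [mem_range] at hx
  omega

lemma hook_eq_weyl (t : ℕ) (r : ℕ → ℕ) (hr : Antitone r) (h0 : ∀ i, t ≤ i → r i = 0) :
    ∏ p ∈ ydBoxes t r, (((t : ℚ) + ((p.2 : ℚ) - (p.1 : ℚ))) / (ydHook t r p.1 p.2 : ℚ))
      = (∏ i ∈ range t, ∏ k ∈ Ioo i t,
            (((r i + (t - 1 - i) : ℕ) : ℚ) - ((r k + (t - 1 - k) : ℕ) : ℚ)))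
          / ∏ i ∈ range t, ((Nat.factorial (t - 1 - i)) : ℚ) := by
  set l : ℕ → ℕ := fun i => r i + (t - 1 - i) with hl
  have hcol_le : ∀ j, ydCol t r j ≤ t := fun j => ydCol_le j
  have hlstrict : ∀ i k : ℕ, i < k → k < t → l k < l i := by
    intro i k hik hkt
    have h1 := hr (le_of_lt hik)
    simp only [hl]
    omega
  have main : ∀ i, i < t →
      (∏ j ∈ range (r i), ydHook t r i j) * (∏ k ∈ Ioo i t, (l i - l k))
        = Nat.factorial (l i) := by
    intro i hit
    have hg_eq : ∀ j ∈ range (r i), ydHook t r i j = l i - (t + j - ydCol t r j) := by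
      intro j hj
      rw [mem_range] at hj
      have h1 : i < ydCol t r j := lt_ydCol hr hit hj
      have h2 := hcol_le j
      simp only [ydHook, hl]
      omega
    have hgmono : StrictMono (fun j => t + j - ydCol t r j) := by
      apply strictMono_nat_of_lt_succ
      intro j
      have h1 : ydCol t r (j + 1) ≤ ydCol t r j := ydCol_anti (Nat.le_succ j)
      have h2 := hcol_le j
      show t + j - ydCol t r j < t + (j + 1) - ydCol t r (j + 1)
      omega
    have hgin : ∀ j, j < r i → t + j - ydCol t r j < l i := by
      intro j hj
      have h1 : i < ydCol t r j := lt_ydCol hr hit hj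
      have h2 := hcol_le j
      simp only [hl]
      omega
    have hlinj : ∀ a ∈ Ioo i t, ∀ b ∈ Ioo i t, l a = l b → a = b := by
      intro a ha b hb hab
      rw [mem_Ioo] at ha hb
      by_contra hne
      rcases Nat.lt_or_ge a b with h | h
      · have := hlstrict a b h hb.2; omega
      · have h' : b < a := by omega
        have := hlstrict b a h' ha.2; omega
    set Gim := (range (r i)).image (fun j => t + j - ydCol t r j) with hGim
    set Lim := (Ioo i t).image l with hLim
    have hdisj : Disjoint Gim Lim := by
      rw [Finset.disjoint_left]
      rintro x hxg hxl
      simp only [hGim, hLim, mem_image, mem_range, mem_Ioo] at hxg hxl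
      obtain ⟨j, hj, rfl⟩ := hxg
      obtain ⟨k, ⟨hik, hkt⟩, hk⟩ := hxl
      have hcj_le := hcol_le j
      by_cases hcase : j < r k
      · have hck : k < ydCol t r j := lt_ydCol hr hkt hcase
        simp only [hl] at hk
        omega
      · have hck : ydCol t r j ≤ k := by
          have hsub : (range t).filter (fun a => j < r a) ⊆ range k := by
            intro a ha
            simp only [mem_filter, mem_range] at ha ⊢
            by_contra hak
            have := hr (le_of_not_gt hak)
            omega
          calc ydCol t r j ≤ (range k).card := card_le_card hsub
            _ = k := card_range k
        simp only [hl] at hk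
        omega
    have hcard : Gim.card + Lim.card = l i := by
      rw [hGim, hLim, Finset.card_image_of_injective _ hgmono.injective,
        Finset.card_image_of_injOn (fun a ha b hb hab => hlinj a ha b hb hab),
        card_range, Nat.card_Ioo]
      simp only [hl]
      omega
    have hunion : Gim ∪ Lim = range (l i) := by
      apply Finset.eq_of_subset_of_card_le
      · intro x hx
        rw [mem_union] at hx
        rw [mem_range]
        rcases hx with hx | hx
        · simp only [hGim, mem_image, mem_range] at hx
          obtain ⟨j, hj, rfl⟩ := hx
          exact hgin j hj
        · simp only [hLim, mem_image, mem_Ioo] at hx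
          obtain ⟨k, ⟨hik, hkt⟩, rfl⟩ := hx
          exact hlstrict i k hik hkt
      · rw [card_range, ← hcard]
        exact le_of_eq (card_union_of_disjoint hdisj).symm
    calc (∏ j ∈ range (r i), ydHook t r i j) * (∏ k ∈ Ioo i t, (l i - l k))
        = (∏ x ∈ Gim, (l i - x)) * (∏ x ∈ Lim, (l i - x)) := by
          congr 1
          · rw [prod_congr rfl hg_eq, hGim,
              prod_image (fun a _ b _ h => hgmono.injective h)]
          · rw [hLim, prod_image hlinj]
      _ = ∏ x ∈ Gim ∪ Lim, (l i - x) := (Finset.prod_union hdisj).symm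
      _ = ∏ x ∈ range (l i), (l i - x) := by rw [hunion]
      _ = Nat.factorial (l i) := prod_range_sub (l i)
  have hnum : ∀ i, i < t → ∏ j ∈ range (r i), ((t : ℚ) + ((j : ℚ) - (i : ℚ)))
      = (Nat.factorial (l i) : ℚ) / (Nat.factorial (t - 1 - i) : ℚ) := by
    intro i hit
    have hcongr : ∀ j ∈ range (r i), ((t : ℚ) + ((j : ℚ) - (i : ℚ)))
        = (((t - 1 - i) + 1 + j : ℕ) : ℚ) := by
      intro j _
      have h2 : ((t - 1 - i) + 1 + j : ℕ) = (t - i) + j := by omega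
      rw [h2, Nat.cast_add, Nat.cast_sub (le_of_lt hit)]
      ring
    rw [prod_congr rfl hcongr, ← Nat.cast_prod]
    have h3 := fact_prod (t - 1 - i) (r i)
    have h4 : (t - 1 - i) + r i = l i := by simp only [hl]; omega
    rw [h4] at h3
    have h5 : (Nat.factorial (t - 1 - i) : ℚ) ≠ 0 :=
      Nat.cast_ne_zero.mpr (Nat.factorial_ne_zero _)
    rw [eq_div_iff h5, mul_comm]
    exact_mod_cast congrArg (Nat.cast (R := ℚ)) h3
  have hrow : ∀ i ∈ range t,
      (∏ j ∈ range (r i), (((t : ℚ) + ((j : ℚ) - (i : ℚ))) / (ydHook t r i j : ℚ)))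
        = (∏ k ∈ Ioo i t, ((l i : ℚ) - (l k : ℚ))) / (Nat.factorial (t - 1 - i) : ℚ) := by
    intro i hi
    rw [mem_range] at hi
    rw [prod_div_distrib, hnum i hi]
    have hmain := main i hi
    have hfact_ne : (Nat.factorial (l i) : ℚ) ≠ 0 :=
      Nat.cast_ne_zero.mpr (Nat.factorial_ne_zero _)
    have hfa_ne : (Nat.factorial (t - 1 - i) : ℚ) ≠ 0 :=
      Nat.cast_ne_zero.mpr (Nat.factorial_ne_zero _)
    have hmainQ : (∏ j ∈ range (r i), (ydHook t r i j : ℚ))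
        * (∏ k ∈ Ioo i t, ((l i - l k : ℕ) : ℚ)) = (Nat.factorial (l i) : ℚ) := by
      rw [← Nat.cast_prod, ← Nat.cast_prod, ← Nat.cast_mul, hmain]
    have hcast : ∀ k ∈ Ioo i t, ((l i - l k : ℕ) : ℚ) = (l i : ℚ) - (l k : ℚ) := by
      intro k hk
      rw [mem_Ioo] at hk
      exact Nat.cast_sub (le_of_lt (hlstrict i k hk.1 hk.2))
    rw [prod_congr rfl hcast] at hmainQ
    have hP_ne : (∏ k ∈ Ioo i t, ((l i : ℚ) - (l k : ℚ))) ≠ 0 := by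
      rw [prod_ne_zero_iff]
      intro k hk
      rw [mem_Ioo] at hk
      have hlt := hlstrict i k hk.1 hk.2
      have hle : (l k : ℚ) < (l i : ℚ) := by exact_mod_cast hlt
      exact sub_ne_zero.mpr (ne_of_gt hle)
    have hH_ne : (∏ j ∈ range (r i), (ydHook t r i j : ℚ)) ≠ 0 := by
      intro hzero
      rw [hzero, zero_mul] at hmainQ
      exact hfact_ne hmainQ.symm
    rw [div_div, div_eq_div_iff (mul_ne_zero hfa_ne hH_ne) hfa_ne, ← hmainQ]
    ring
  have hstep : (∏ i ∈ range t, ∏ j ∈ range (r i),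
        (fun p : ℕ × ℕ => ((t : ℚ) + ((p.2 : ℚ) - (p.1 : ℚ))) / (ydHook t r p.1 p.2 : ℚ)) (i, j))
      = ∏ i ∈ range t,
          ((∏ k ∈ Ioo i t, ((l i : ℚ) - (l k : ℚ))) / (Nat.factorial (t - 1 - i) : ℚ)) :=
    Finset.prod_congr rfl (fun i hi => hrow i hi)
  refine Eq.trans (prod_ydBoxes t r hr _) (hstep.trans ?_)
  rw [prod_div_distrib]

/-! ### the Vandermonde summation -/

open Polynomial in
/-- the `p`-th Faulhaber polynomial, scaled to be monic -/
noncomputable def Qmon (p : ℕ) : ℚ[X] :=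
  ∑ i ∈ range (p + 1), Polynomial.C ((_root_.bernoulli i) * ((p + 1).choose i)) * X ^ (p + 1 - i)

open Polynomial in
lemma Qmon_coeff_top (p : ℕ) : (Qmon p).coeff (p + 1) = 1 := by
  rw [Qmon, finset_sum_coeff]
  rw [Finset.sum_eq_single 0]
  · simp
  · intro i hi hne
    rw [coeff_C_mul, coeff_X_pow, if_neg (by rw [mem_range] at hi; omega), mul_zero]
  · intro h
    exact absurd (mem_range.mpr (Nat.succ_pos p)) h

open Polynomial in
lemma Qmon_natDegree_le (p : ℕ) : (Qmon p).natDegree ≤ p + 1 := by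
  apply Polynomial.natDegree_sum_le_of_forall_le
  intro i hi
  refine le_trans (natDegree_C_mul_le _ _) ?_
  rw [natDegree_X_pow]
  rw [mem_range] at hi
  omega

lemma Qmon_monic (p : ℕ) : (Qmon p).Monic :=
  Polynomial.monic_of_natDegree_le_of_coeff_eq_one (p + 1) (Qmon_natDegree_le p)
    (Qmon_coeff_top p)

lemma Qmon_natDegree (p : ℕ) : (Qmon p).natDegree = p + 1 :=
  le_antisymm (Qmon_natDegree_le p)
    (Polynomial.le_natDegree_of_ne_zero (by rw [Qmon_coeff_top]; exact one_ne_zero))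

open Polynomial in
lemma Qmon_eval (p n : ℕ) :
    (Qmon p).eval (n : ℚ) = ((p : ℚ) + 1) * ∑ x ∈ range n, (x : ℚ) ^ p := by
  rw [_root_.sum_range_pow n p]
  rw [Qmon, eval_finset_sum]
  simp only [eval_mul, eval_C, eval_pow, eval_X]
  rw [Finset.mul_sum]
  apply sum_congr rfl
  intro i hi
  have hne : ((p : ℚ) + 1) ≠ 0 := by positivity
  field_simp

lemma vdm_sum_inc (n : ℕ) (u : Fin (n + 1) → ℕ) (hu : ∀ i : Fin n, u i.castSucc ≤ u i.succ) :
    ∑ m ∈ Fintype.piFinset (fun i : Fin n => Finset.Ico (u i.castSucc) (u i.succ)),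
        (Matrix.vandermonde (fun i => (m i : ℚ))).det
      = ((Nat.factorial n : ℚ))⁻¹ * (Matrix.vandermonde (fun i => (u i : ℚ))).det := by
  classical
  set G : ℕ → ℕ → ℚ := fun j ν => ∑ x ∈ range ν, (x : ℚ) ^ j with hG
  set B : Matrix (Fin (n + 1)) (Fin (n + 1)) ℚ :=
    Matrix.of fun i j => Fin.cases (motive := fun _ => ℚ) 1 (fun j' => G j' (u i)) j with hB
  set Cm : Matrix (Fin (n + 1)) (Fin (n + 1)) ℚ :=
    Matrix.of fun i j => Fin.cases (motive := fun _ => ℚ) (B 0 j)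
      (fun i' => B i'.succ j - B i'.castSucc j) i with hC
  set E : Matrix (Fin n) (Fin n) ℚ :=
    Matrix.of fun i j => ∑ x ∈ Finset.Ico (u i.castSucc) (u i.succ), (x : ℚ) ^ (j : ℕ)
    with hE
  -- Step D: the sum of determinants is det E
  have stepD : ∑ m ∈ Fintype.piFinset (fun i : Fin n => Finset.Ico (u i.castSucc) (u i.succ)),
      (Matrix.vandermonde (fun i => (m i : ℚ))).det = E.det := by
    have hml := (Matrix.detRowAlternating :
        (Fin n → ℚ) [⋀^Fin n]→ₗ[ℚ] ℚ).toMultilinearMap.map_sum_finset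
      (fun (i : Fin n) (x : ℕ) => fun j : Fin n => (x : ℚ) ^ (j : ℕ))
      (fun i : Fin n => Finset.Ico (u i.castSucc) (u i.succ))
    refine Eq.trans (Finset.sum_congr rfl fun m _ => ?_) (hml.symm.trans ?_)
    · rfl
    · show (Matrix.detRowAlternating : (Fin n → ℚ) [⋀^Fin n]→ₗ[ℚ] ℚ) _
        = (Matrix.detRowAlternating : (Fin n → ℚ) [⋀^Fin n]→ₗ[ℚ] ℚ) E
      congr 1
      funext i
      funext j
      simp only [hE, Matrix.of_apply, Finset.sum_apply]
  -- Step B/C: det E = det Cm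
  have stepBC : Cm.det = E.det := by
    rw [Matrix.det_succ_column_zero, Fin.sum_univ_succ]
    have hzero : ∀ i : Fin n, (-1 : ℚ) ^ ((i.succ : Fin (n + 1)) : ℕ) * Cm i.succ 0 *
        (Cm.submatrix i.succ.succAbove Fin.succ).det = 0 := by
      intro i
      have : Cm i.succ 0 = 0 := by
        simp only [hC, Matrix.of_apply, Fin.cases_succ, hB, Fin.cases_zero, sub_self]
      rw [this, mul_zero, zero_mul]
    rw [Finset.sum_eq_zero (fun i _ => hzero i), add_zero]
    have h00 : Cm 0 0 = 1 := by
      simp only [hC, Matrix.of_apply, Fin.cases_zero, hB, Fin.cases_zero]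
    rw [h00]
    simp only [Fin.val_zero, pow_zero, one_mul, Fin.succAbove_zero]
    congr 1
    ext i j
    simp only [Matrix.submatrix_apply, hC, Matrix.of_apply, Fin.cases_succ, hB,
      Fin.cases_succ, hE]
    rw [Finset.sum_Ico_eq_sub _ (hu i)]
  -- Step A: det B = det Cm
  have stepA : B.det = Cm.det := by
    apply Matrix.det_eq_of_forall_row_eq_smul_add_pred (fun _ => (1 : ℚ))
    · intro j
      simp only [hC, Matrix.of_apply, Fin.cases_zero]
    · intro i j
      simp only [hC, Matrix.of_apply, Fin.cases_succ]
      ring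
  -- Step E: det B via polynomials
  have stepE : B.det = ((Nat.factorial n : ℚ))⁻¹
      * (Matrix.vandermonde (fun i => (u i : ℚ))).det := by
    set d : Fin (n + 1) → ℚ :=
      fun j => Fin.cases (motive := fun _ => ℚ) 1 (fun j' => (((j' : ℕ) : ℚ) + 1)⁻¹) j with hd
    set P : Fin (n + 1) → Polynomial ℚ :=
      fun j => Fin.cases (motive := fun _ => Polynomial ℚ) 1 (fun j' => Qmon j') j with hP
    have hBd : B = Matrix.of fun i j => d j * (P j).eval ((u i : ℚ)) := by
      ext i j
      induction j using Fin.cases with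
      | zero =>
        simp only [hB, Matrix.of_apply, Fin.cases_zero, hd, hP, Polynomial.eval_one, mul_one]
      | succ j' =>
        simp only [hB, Matrix.of_apply, Fin.cases_succ, hd, hP]
        rw [Qmon_eval]
        rw [inv_mul_cancel_left₀ (by positivity : ((j' : ℕ) : ℚ) + 1 ≠ 0)]
    have hdeg : ∀ j : Fin (n + 1), (P j).natDegree = (j : ℕ) := by
      intro j
      induction j using Fin.cases with
      | zero => simp [hP]
      | succ j' => simp [hP, Qmon_natDegree]
    have hmonic : ∀ j : Fin (n + 1), (P j).Monic := by
      intro j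
      induction j using Fin.cases with
      | zero => simpa [hP] using Polynomial.monic_one
      | succ j' => simpa [hP] using Qmon_monic j'
    have hdm := Matrix.det_mul_row d
      (Matrix.of fun (i : Fin (n + 1)) (j : Fin (n + 1)) => (P j).eval ((u i : ℚ)))
    rw [hBd,
      show (Matrix.of fun i j => d j * (P j).eval ((u i : ℚ)))
        = (Matrix.of fun i j => d j *
            (Matrix.of fun (i : Fin (n + 1)) (j : Fin (n + 1)) => (P j).eval ((u i : ℚ))) i j)
        from rfl,
      hdm,
      ← Matrix.det_eval_matrixOfPolynomials_eq_det_vandermonde (fun i => (u i : ℚ)) P hdeg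
        hmonic]
    congr 1
    rw [Fin.prod_univ_succ]
    simp only [hd, Fin.cases_zero, Fin.cases_succ, one_mul]
    rw [Finset.prod_inv_distrib]
    congr 1
    have : ∀ j : Fin n, ((j : ℕ) : ℚ) + 1 = (((j : ℕ) + 1 : ℕ) : ℚ) := by
      intro j; push_cast; ring
    rw [Finset.prod_congr rfl (fun j _ => this j), ← Nat.cast_prod]
    congr 1
    rw [Fin.prod_univ_eq_prod_range (fun j => j + 1) n]
    exact prod_range_add_one_eq_factorial n
  rw [stepD, ← stepBC, ← stepA, stepE]

lemma prod_pairs_rev {M : Type*} [CommMonoid M] (n : ℕ) (f : Fin n → Fin n → M) :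
    ∏ i : Fin n, ∏ j ∈ Ioi i, f i j = ∏ i : Fin n, ∏ j ∈ Ioi i, f j.rev i.rev := by
  rw [Finset.prod_sigma', Finset.prod_sigma']
  refine Finset.prod_nbij' (fun x => ⟨x.2.rev, x.1.rev⟩) (fun x => ⟨x.2.rev, x.1.rev⟩)
    ?_ ?_ ?_ ?_ ?_
  · rintro ⟨a, b⟩ h
    simp only [mem_sigma, mem_univ, mem_Ioi, true_and] at h ⊢
    exact Fin.rev_lt_rev.mpr h
  · rintro ⟨a, b⟩ h
    simp only [mem_sigma, mem_univ, mem_Ioi, true_and] at h ⊢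
    exact Fin.rev_lt_rev.mpr h
  · rintro ⟨a, b⟩ _
    simp [Fin.rev_rev]
  · rintro ⟨a, b⟩ _
    simp [Fin.rev_rev]
  · rintro ⟨a, b⟩ _
    simp [Fin.rev_rev]

lemma vdm_sum_dec (n : ℕ) (l : Fin (n + 1) → ℕ) (hl : ∀ i : Fin n, l i.succ ≤ l i.castSucc) :
    ∑ m ∈ Fintype.piFinset (fun i : Fin n => Finset.Ico (l i.succ) (l i.castSucc)),
        ∏ i : Fin n, ∏ j ∈ Ioi i, ((m i : ℚ) - (m j : ℚ))
      = (∏ i : Fin (n + 1), ∏ j ∈ Ioi i, ((l i : ℚ) - (l j : ℚ))) / (Nat.factorial n : ℚ) := by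
  have hu : ∀ i : Fin n,
      (fun k : Fin (n + 1) => l k.rev) i.castSucc ≤ (fun k => l k.rev) i.succ := by
    intro i
    simp only
    rw [Fin.rev_castSucc, Fin.rev_succ]
    exact hl i.rev
  have H := vdm_sum_inc n (fun k => l k.rev) hu
  simp only [Matrix.det_vandermonde] at H
  have hL : ∑ m ∈ Fintype.piFinset (fun i : Fin n => Finset.Ico (l i.succ) (l i.castSucc)),
        ∏ i : Fin n, ∏ j ∈ Ioi i, ((m i : ℚ) - (m j : ℚ))
      = ∑ m ∈ Fintype.piFinset (fun i : Fin n =>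
          Finset.Ico (l (i.castSucc).rev) (l (i.succ).rev)),
        ∏ i : Fin n, ∏ j ∈ Ioi i, ((m j : ℚ) - (m i : ℚ)) := by
    refine Finset.sum_nbij' (fun m => fun i => m i.rev) (fun m => fun i => m i.rev)
      ?_ ?_ ?_ ?_ ?_
    · intro m hm
      rw [Fintype.mem_piFinset] at hm ⊢
      intro i
      rw [Fin.rev_castSucc, Fin.rev_succ]
      exact hm i.rev
    · intro m hm
      rw [Fintype.mem_piFinset] at hm ⊢
      intro i
      have h1 := hm i.rev
      rw [Fin.rev_castSucc, Fin.rev_succ, Fin.rev_rev] at h1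
      exact h1
    · intro m _
      funext i
      simp [Fin.rev_rev]
    · intro m _
      funext i
      simp [Fin.rev_rev]
    · intro m _
      have h2 := prod_pairs_rev n (fun i j : Fin n => ((m j.rev : ℚ) - (m i.rev : ℚ)))
      simp only [Fin.rev_rev] at h2
      exact h2.symm
  rw [hL]
  have hint : (fun i : Fin n => Finset.Ico (l (i.castSucc).rev) (l (i.succ).rev))
      = fun i : Fin n => Finset.Ico ((fun k : Fin (n + 1) => l k.rev) i.castSucc)
          ((fun k : Fin (n + 1) => l k.rev) i.succ) := rfl
  rw [hint, H]
  have hR : (∏ i : Fin (n + 1), ∏ j ∈ Ioi i, ((l j.rev : ℚ) - (l i.rev : ℚ)))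
      = ∏ i : Fin (n + 1), ∏ j ∈ Ioi i, ((l i : ℚ) - (l j : ℚ)) := by
    have h3 := prod_pairs_rev (n + 1) (fun i j : Fin (n + 1) => ((l j.rev : ℚ) - (l i.rev : ℚ)))
    simp only [Fin.rev_rev] at h3
    exact h3
  rw [hR, inv_mul_eq_div]

lemma range_pairs_eq_fin (n : ℕ) (F : ℕ → ℕ → ℚ) :
    ∏ i ∈ range n, ∏ k ∈ Ioo i n, F i k = ∏ i : Fin n, ∏ j ∈ Ioi i, F i.1 j.1 := by
  rw [← Fin.prod_univ_eq_prod_range (fun i => ∏ k ∈ Ioo i n, F i k) n]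
  apply Finset.prod_congr rfl
  intro i _
  refine (Finset.prod_nbij (fun j : Fin n => (j.1 : ℕ)) ?_ ?_ ?_ ?_).symm
  · intro j hj
    rw [mem_Ioi] at hj
    rw [mem_Ioo]
    exact ⟨hj, j.isLt⟩
  · intro a _ b _ h
    exact Fin.ext h
  · intro k hk
    rw [mem_coe, mem_Ioo] at hk
    exact ⟨⟨k, hk.2⟩, by rw [mem_coe, mem_Ioi]; exact hk.1, rfl⟩
  · intro a _
    rfl

/-! ### master induction -/

theorem master : ∀ t : ℕ, ∀ r : ℕ → ℕ, Antitone r → (∀ i, t ≤ i → r i = 0) →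
    (({T : ℕ → ℕ → ℕ | IsSSYT t t r T}.ncard : ℚ))
      = ∏ p ∈ ydBoxes t r,
          (((t : ℚ) + ((p.2 : ℚ) - (p.1 : ℚ))) / (ydHook t r p.1 p.2 : ℚ)) := by
  intro t
  induction t with
  | zero =>
    intro r hr h0
    have hbox : ydBoxes 0 r = ∅ := by
      unfold ydBoxes
      rw [range_zero]
      simp
    rw [hbox, Finset.prod_empty]
    have hset : {T : ℕ → ℕ → ℕ | IsSSYT 0 0 r T} = {fun _ _ => 0} := by
      ext T
      simp only [Set.mem_setOf_eq, Set.mem_singleton_iff]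
      constructor
      · intro hT
        funext i j
        exact (hT.1 i j).2 (by rw [hbox]; exact notMem_empty _)
      · rintro rfl
        refine ⟨fun i j => ⟨fun h => ?_, fun _ => rfl⟩, fun i j h => ?_, fun i j h => ?_⟩ <;>
          simp [hbox] at h
    rw [hset, Set.ncard_singleton, Nat.cast_one]
  | succ t IH =>
    intro r hr h0
    rw [card_rec hr h0, Nat.cast_sum]
    have htlt : t < t + 1 := Nat.lt_succ_self t
    set C0 : Finset (Fin (t + 1) → ℕ) := (Cset t r).filter (fun c => c ⟨t, htlt⟩ = 0) with hC0
    have hzero : ∀ c ∈ Cset t r, c ∉ C0 →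
        (({T : ℕ → ℕ → ℕ | IsSSYT (t + 1) t (mu t c) T}.ncard : ℚ)) = 0 := by
      intro c hc hc0
      have hne : c ⟨t, htlt⟩ ≠ 0 := by
        intro h
        exact hc0 (mem_filter.mpr ⟨hc, h⟩)
      have hmut : mu t c t ≠ 0 := by rw [mu_val c htlt]; exact hne
      rw [ssyt_empty (mu_anti hr hc) hmut htlt, Set.ncard_empty, Nat.cast_zero]
    rw [← Finset.sum_subset (filter_subset _ _) (fun c hc hc0 => hzero c hc hc0)]
    set D : Finset (Fin t → ℕ) :=
      Fintype.piFinset (fun i : Fin t => Finset.Icc (r (i.1 + 1)) (r i.1)) with hD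
    set ext0 : (Fin t → ℕ) → (Fin (t + 1) → ℕ) :=
      fun d => fun i => if h : i.1 < t then d ⟨i.1, h⟩ else 0 with hext0
    -- reindex the sum over C0 as a sum over D
    have hsum2 : ∑ c ∈ C0, (({T : ℕ → ℕ → ℕ | IsSSYT (t + 1) t (mu t c) T}.ncard : ℚ))
        = ∑ d ∈ D, (({T : ℕ → ℕ → ℕ | IsSSYT (t + 1) t (mu t (ext0 d)) T}.ncard : ℚ)) := by
      have hli : ∀ c ∈ C0, ext0 (fun i : Fin t => c ⟨i.1, by omega⟩) = c := by
        intro c hc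
        funext i
        simp only [hext0]
        by_cases h : i.1 < t
        · rw [dif_pos h]
        · rw [dif_neg h]
          rw [hC0, mem_filter] at hc
          have hi2 := i.isLt
          have hit : i = ⟨t, htlt⟩ := by
            apply Fin.ext
            show i.1 = t
            omega
          rw [hit, hc.2]
      refine Finset.sum_nbij' (fun c => fun i : Fin t => c ⟨i.1, by omega⟩) ext0
        ?_ ?_ ?_ ?_ ?_
      · intro c hc
        rw [hC0, mem_filter] at hc
        rw [hD, Fintype.mem_piFinset]
        intro i
        rw [mem_Icc]
        exact mu_bounds hc.1 ⟨i.1, by omega⟩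
      · intro d hd
        rw [hD, Fintype.mem_piFinset] at hd
        rw [hC0, mem_filter]
        constructor
        · rw [Cset, Fintype.mem_piFinset]
          intro i
          simp only [hext0]
          by_cases h : i.1 < t
          · rw [dif_pos h]
            have hmem := hd ⟨i.1, h⟩
            rw [mem_Icc] at hmem ⊢
            exact hmem
          · rw [dif_neg h]
            rw [mem_Icc]
            have hit : i.1 = t := by omega
            refine ⟨?_, Nat.zero_le _⟩
            rw [hit, h0 (t + 1) le_rfl]
        · simp only [hext0]
          rw [dif_neg (lt_irrefl t)]
      · exact hli
      · intro d hd
        funext i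
        simp only [hext0]
        rw [dif_pos i.2]
      · intro c hc
        exact congrArg (fun z => ((Set.ncard {T : ℕ → ℕ → ℕ | IsSSYT (t + 1) t (mu t z) T} : ℕ) : ℚ))
          (hli c hc).symm
    rw [hsum2]
    -- each term via IH and the Weyl form
    have hextC : ∀ d ∈ D, ext0 d ∈ Cset t r := by
      intro d hd
      rw [hD, Fintype.mem_piFinset] at hd
      rw [Cset, Fintype.mem_piFinset]
      intro i
      simp only [hext0]
      by_cases h : i.1 < t
      · rw [dif_pos h]
        have hmem := hd ⟨i.1, h⟩
        rw [mem_Icc] at hmem ⊢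
        exact hmem
      · rw [dif_neg h]
        rw [mem_Icc]
        have hit : i.1 = t := by omega
        refine ⟨?_, Nat.zero_le _⟩
        rw [hit, h0 (t + 1) le_rfl]
    have hmu0 : ∀ d, ∀ i, t ≤ i → mu t (ext0 d) i = 0 := by
      intro d i hi
      by_cases h : i < t + 1
      · rw [mu_val _ h]
        simp only [hext0]
        rw [dif_neg (by omega)]
      · rw [mu, dif_neg h]
    have hmuval : ∀ d, ∀ i : ℕ, ∀ h : i < t, mu t (ext0 d) i = d ⟨i, h⟩ := by
      intro d i h
      rw [mu_val _ (by omega : i < t + 1)]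
      simp only [hext0]
      rw [dif_pos h]
    have hterm : ∀ d ∈ D, (({T : ℕ → ℕ → ℕ | IsSSYT (t + 1) t (mu t (ext0 d)) T}.ncard : ℚ))
        = (∏ i : Fin t, ∏ j ∈ Ioi i, ((((d i + (t - 1 - i.1)) : ℕ) : ℚ)
            - (((d j + (t - 1 - j.1)) : ℕ) : ℚ)))
          / ∏ i ∈ range t, ((Nat.factorial (t - 1 - i)) : ℚ) := by
      intro d hd
      have hanti : Antitone (mu t (ext0 d)) := mu_anti hr (hextC d hd)
      have h0' : ∀ i, t ≤ i → mu t (ext0 d) i = 0 := hmu0 d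
      have hsetEq : {T : ℕ → ℕ → ℕ | IsSSYT (t + 1) t (mu t (ext0 d)) T}
          = {T : ℕ → ℕ → ℕ | IsSSYT t t (mu t (ext0 d)) T} := by
        ext T
        exact isSSYT_congr (fun i hi => h0' i (by omega)) h0' T
      rw [hsetEq, IH (mu t (ext0 d)) hanti h0',
        hook_eq_weyl t (mu t (ext0 d)) hanti h0']
      congr 1
      rw [range_pairs_eq_fin t
        (fun a b => ((mu t (ext0 d) a + (t - 1 - a) : ℕ) : ℚ)
          - ((mu t (ext0 d) b + (t - 1 - b) : ℕ) : ℚ))]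
      apply Finset.prod_congr rfl
      intro i _
      apply Finset.prod_congr rfl
      intro j hj
      rw [mem_Ioi] at hj
      rw [hmuval d i.1 i.isLt, hmuval d j.1 j.isLt]
    rw [Finset.sum_congr rfl hterm]
    rw [← Finset.sum_div]
    -- apply the Vandermonde summation
    have hl' : ∀ i : Fin t, (fun k : Fin (t + 1) => r k.1 + (t - k.1)) i.succ
        ≤ (fun k : Fin (t + 1) => r k.1 + (t - k.1)) i.castSucc := by
      intro i
      have h1 : r (i.1 + 1) ≤ r i.1 := hr (by omega)
      have h2 := i.isLt
      simp only [Fin.val_succ, Fin.coe_castSucc]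
      omega
    have hvdm := vdm_sum_dec t (fun k : Fin (t + 1) => r k.1 + (t - k.1)) hl'
    have hreindex : ∑ d ∈ D, (∏ i : Fin t, ∏ j ∈ Ioi i, ((((d i + (t - 1 - i.1)) : ℕ) : ℚ)
            - (((d j + (t - 1 - j.1)) : ℕ) : ℚ)))
        = ∑ m ∈ Fintype.piFinset (fun i : Fin t =>
            Finset.Ico ((fun k : Fin (t + 1) => r k.1 + (t - k.1)) i.succ)
              ((fun k : Fin (t + 1) => r k.1 + (t - k.1)) i.castSucc)),
          ∏ i : Fin t, ∏ j ∈ Ioi i, ((m i : ℚ) - (m j : ℚ)) := by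
      refine Finset.sum_nbij' (fun d => fun i : Fin t => d i + (t - 1 - i.1))
        (fun m => fun i : Fin t => m i - (t - 1 - i.1)) ?_ ?_ ?_ ?_ ?_
      · intro d hd
        rw [hD, Fintype.mem_piFinset] at hd
        rw [Fintype.mem_piFinset]
        intro i
        have hmem := hd i
        rw [mem_Icc] at hmem
        have h2 := i.isLt
        simp only [Fin.val_succ, Fin.coe_castSucc, mem_Ico]
        omega
      · intro m hm
        rw [Fintype.mem_piFinset] at hm
        rw [hD, Fintype.mem_piFinset]
        intro i
        have hmem := hm i
        simp only [Fin.val_succ, Fin.coe_castSucc, mem_Ico] at hmem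
        have h2 := i.isLt
        simp only [mem_Icc]
        omega
      · intro d _
        funext i
        change d i + (t - 1 - i.1) - (t - 1 - i.1) = d i
        omega
      · intro m hm
        rw [Fintype.mem_piFinset] at hm
        funext i
        have hmem := hm i
        simp only [Fin.val_succ, Fin.coe_castSucc, mem_Ico] at hmem
        have h2 := i.isLt
        change m i - (t - 1 - i.1) + (t - 1 - i.1) = m i
        omega
      · intro d _
        rfl
    rw [hreindex, hvdm]
    -- now identify with the hook-content product of shape r at t+1
    rw [hook_eq_weyl (t + 1) r hr h0]
    have hrw : ∀ i : ℕ, t + 1 - 1 - i = t - i := fun i => by omega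
    have hnum_eq : (∏ i ∈ range (t + 1), ∏ k ∈ Ioo i (t + 1),
          (((r i + (t + 1 - 1 - i) : ℕ) : ℚ) - ((r k + (t + 1 - 1 - k) : ℕ) : ℚ)))
        = ∏ i : Fin (t + 1), ∏ j ∈ Ioi i,
            (((r i.1 + (t - i.1) : ℕ) : ℚ) - ((r j.1 + (t - j.1) : ℕ) : ℚ)) := by
      rw [range_pairs_eq_fin (t + 1)
        (fun a b => ((r a + (t + 1 - 1 - a) : ℕ) : ℚ) - ((r b + (t + 1 - 1 - b) : ℕ) : ℚ))]
      apply Finset.prod_congr rfl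
      intro i _
      apply Finset.prod_congr rfl
      intro j _
      rw [hrw i.1, hrw j.1]
    have hden_eq : (∏ i ∈ range (t + 1), ((Nat.factorial (t + 1 - 1 - i)) : ℚ))
        = ((Nat.factorial t : ℚ)) * ∏ i ∈ range t, ((Nat.factorial (t - 1 - i)) : ℚ) := by
      calc ∏ i ∈ range (t + 1), ((Nat.factorial (t + 1 - 1 - i)) : ℚ)
          = ∏ i ∈ range (t + 1), ((Nat.factorial (t - i)) : ℚ) :=
            Finset.prod_congr rfl (fun i _ => by norm_num)
        _ = (∏ i ∈ range t, ((Nat.factorial (t - (i + 1))) : ℚ)) * ((Nat.factorial (t - 0)) : ℚ) :=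
            Finset.prod_range_succ' _ t
        _ = ((Nat.factorial t : ℚ)) * ∏ i ∈ range t, ((Nat.factorial (t - 1 - i)) : ℚ) := by
            rw [Nat.sub_zero, mul_comm]
            congr 1
            exact Finset.prod_congr rfl (fun i _ => by congr 2; omega)
    rw [hnum_eq, hden_eq]
    rw [div_div]

end HookAux

/-- Hook-content formula: the number of SSYT of shape λ with entries in {1,…,t} equals
∏_{r ∈ λ} (t + c_λ(r))/h_λ(r). -/
theorem stmt12 (m t : ℕ) (r : ℕ → ℕ) (hr : Antitone r) (hr0 : ∀ i, m ≤ i → r i = 0) :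
    (({T : ℕ → ℕ → ℕ | IsSSYT m t r T}.ncard : ℚ))
      = ∏ p ∈ ydBoxes m r,
          (((t : ℚ) + ((p.2 : ℚ) - (p.1 : ℚ))) / (ydHook m r p.1 p.2 : ℚ)) := by
  classical
  by_cases hdeg : r t = 0
  · have h0t : ∀ i, t ≤ i → r i = 0 := by
      intro i hi
      have h2 := hr hi
      omega
    have hset : {T : ℕ → ℕ → ℕ | IsSSYT m t r T} = {T : ℕ → ℕ → ℕ | IsSSYT t t r T} := by
      ext T
      exact HookAux.isSSYT_congr hr0 h0t T
    have hprod : (∏ p ∈ ydBoxes m r,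
          (((t : ℚ) + ((p.2 : ℚ) - (p.1 : ℚ))) / (ydHook m r p.1 p.2 : ℚ)))
        = ∏ p ∈ ydBoxes t r,
            (((t : ℚ) + ((p.2 : ℚ) - (p.1 : ℚ))) / (ydHook t r p.1 p.2 : ℚ)) := by
      rw [HookAux.ydBoxes_congr hr0 h0t]
      apply Finset.prod_congr rfl
      intro p _
      rw [HookAux.ydHook_congr hr0 h0t]
    rw [hset, hprod]
    exact HookAux.master t r hr h0t
  · have htm : t < m := by
      by_contra hc
      exact hdeg (hr0 t (le_of_not_gt hc))
    rw [HookAux.ssyt_empty hr hdeg htm, Set.ncard_empty, Nat.cast_zero]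
    symm
    apply Finset.prod_eq_zero ((HookAux.mem_ydBoxes hr).mpr ⟨htm, Nat.pos_of_ne_zero hdeg⟩)
    norm_num
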